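/- (Eckart–Young, lower bound) Let n ≥ 1, let σ_1 ≥ σ_2 ≥ ⋯ ≥ σ_n ≥ 0 be real numbers, let U, V ∈ ℝ^{n×n} be orthogonal matrices (UᵀU = I and VᵀV = I), and let W = U · diag(σ_1, …, σ_n) · Vᵀ. Then for every 0 ≤ k ≤ n and every matrix B ∈ ℝ^{n×n} with rank(B) ≤ k, one has ‖W − B‖_F² ≥ Σ_{i=k+1}^{n} σ_i². -/

import Mathlib

open scoped BigOperators
open Matrix
open scoped RealInnerProductSpace

/-- Squared Frobenius norm of a real matrix: `‖M‖_F² = ∑_{i,j} M_{ij}²`. -/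
def frobSq {m n : ℕ} (M : Matrix (Fin m) (Fin n) ℝ) : ℝ :=
  ∑ i, ∑ j, (M i j) ^ 2

lemma maj_aux {n k : ℕ} (hkn : k < n) (a t : Fin n → ℝ) (haa : Antitone a)
    (ha0 : ∀ i, 0 ≤ a i) (ht0 : ∀ i, 0 ≤ t i) (ht1 : ∀ i, t i ≤ 1)
    (hsum : (n : ℝ) - k ≤ ∑ i, t i) :
    ∑ i ∈ Finset.univ.filter (fun i : Fin n => k ≤ (i:ℕ)), a i ≤ ∑ i, a i * t i := by
  set κ : Fin n := ⟨k, hkn⟩ with hκ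
  have hS : Finset.univ.filter (fun i : Fin n => k ≤ (i:ℕ)) = Finset.Ici κ := by
    ext i; simp [Fin.le_def, hκ]
  set S := Finset.Ici κ with hSdef
  have hcard : (S.card : ℝ) = (n : ℝ) - k := by
    rw [hSdef, Fin.card_Ici]
    rw [show (κ:ℕ) = k from rfl, Nat.cast_sub hkn.le]
  have hsplit : ∑ i, a i * t i = ∑ i ∈ S, a i * t i + ∑ i ∈ Sᶜ, a i * t i :=
    (Finset.sum_add_sum_compl S _).symm
  have htsplit : ∑ i, t i = ∑ i ∈ S, t i + ∑ i ∈ Sᶜ, t i :=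
    (Finset.sum_add_sum_compl S _).symm
  have hA : ∑ i ∈ S, a i - ∑ i ∈ S, a i * t i ≤ a κ * (((n:ℝ) - k) - ∑ i ∈ S, t i) := by
    have : ∑ i ∈ S, a i * (1 - t i) ≤ ∑ i ∈ S, a κ * (1 - t i) := by
      apply Finset.sum_le_sum
      intro i hi
      have hik : κ ≤ i := by simpa [hSdef] using hi
      exact mul_le_mul_of_nonneg_right (haa hik) (by linarith [ht1 i])
    calc ∑ i ∈ S, a i - ∑ i ∈ S, a i * t i = ∑ i ∈ S, a i * (1 - t i) := by
          rw [← Finset.sum_sub_distrib]; congr 1; ext i; ring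
      _ ≤ ∑ i ∈ S, a κ * (1 - t i) := this
      _ = a κ * (((n:ℝ) - k) - ∑ i ∈ S, t i) := by
          rw [← Finset.mul_sum, Finset.sum_sub_distrib, Finset.sum_const, nsmul_eq_mul,
            mul_one, hcard]
  have hB : a κ * (((n:ℝ) - k) - ∑ i ∈ S, t i) ≤ ∑ i ∈ Sᶜ, a i * t i := by
    have h1 : ((n:ℝ) - k) - ∑ i ∈ S, t i ≤ ∑ i ∈ Sᶜ, t i := by linarith
    have h2 : a κ * (((n:ℝ) - k) - ∑ i ∈ S, t i) ≤ a κ * ∑ i ∈ Sᶜ, t i :=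
      mul_le_mul_of_nonneg_left h1 (ha0 κ)
    refine h2.trans ?_
    rw [Finset.mul_sum]
    apply Finset.sum_le_sum
    intro i hi
    have hik : i ≤ κ := by
      have : ¬ κ ≤ i := by simpa [hSdef] using hi
      exact (lt_of_not_ge this).le
    exact mul_le_mul_of_nonneg_right (haa hik) (ht0 i)
  rw [hS]
  show ∑ i ∈ S, a i ≤ _
  linarith

lemma key {n k : ℕ} (hkn : k < n) (σ : Fin n → ℝ) (hσdec : Antitone σ)
    (hσ0 : ∀ i, 0 ≤ σ i) (C : Matrix (Fin n) (Fin n) ℝ) (hC : C.rank ≤ k) :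
    ∑ i ∈ Finset.univ.filter (fun i : Fin n => k ≤ (i:ℕ)), σ i ^ 2
      ≤ frobSq (Matrix.diagonal σ - C) := by
  classical
  set M := Matrix.diagonal σ - C with hM
  set L : EuclideanSpace ℝ (Fin n) →ₗ[ℝ] (Fin n → ℝ) :=
    C.mulVecLin ∘ₗ (WithLp.linearEquiv 2 ℝ (Fin n → ℝ)).toLinearMap with hL
  have hrange : LinearMap.range L = LinearMap.range C.mulVecLin := by
    rw [hL, LinearMap.range_comp_of_range_eq_top]
    exact LinearEquiv.range _
  have hrn := LinearMap.finrank_range_add_finrank_ker L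
  rw [hrange, finrank_euclideanSpace_fin] at hrn
  set d := Module.finrank ℝ (LinearMap.ker L) with hd
  have hrankC : C.rank = Module.finrank ℝ (LinearMap.range C.mulVecLin) := rfl
  have hd' : (n:ℝ) - k ≤ d := by
    have h1 : n ≤ k + d := by omega
    have : (n:ℝ) ≤ k + d := by exact_mod_cast h1
    linarith
  let b := stdOrthonormalBasis ℝ (LinearMap.ker L)
  let x : Fin d → EuclideanSpace ℝ (Fin n) := fun j => ((b j : LinearMap.ker L) : EuclideanSpace ℝ (Fin n))
  have horth : Orthonormal ℝ x :=
    b.orthonormal.comp_linearIsometry (LinearMap.ker L).subtypeₗᵢ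
  have hCx : ∀ j, C.mulVec (x j) = 0 := by
    intro j
    have := (b j).2
    rw [LinearMap.mem_ker] at this
    exact this
  have hinner : ∀ (y z : EuclideanSpace ℝ (Fin n)), ⟪y, z⟫ = ∑ i, y i * z i := by
    intro y z
    simp [PiLp.inner_apply, RCLike.inner_apply, conj_trivial, mul_comm]
  have bessel : ∀ (y : EuclideanSpace ℝ (Fin n)), ∑ j, (⟪x j, y⟫)^2 ≤ ‖y‖^2 := by
    intro y
    have := horth.sum_inner_products_le (s := Finset.univ) y
    simpa [Real.norm_eq_abs, sq_abs] using this
  set t : Fin n → ℝ := fun i => ∑ j, (x j i)^2 with ht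
  have ht0 : ∀ i, 0 ≤ t i := fun i => Finset.sum_nonneg fun j _ => sq_nonneg _
  have ht1 : ∀ i, t i ≤ 1 := by
    intro i
    have h := bessel (EuclideanSpace.single i 1)
    have e : ∀ j, ⟪x j, EuclideanSpace.single i 1⟫ = x j i := by
      intro j
      rw [hinner]
      simp [EuclideanSpace.single_apply]
    rw [Finset.sum_congr rfl (fun j _ => by rw [e j])] at h
    simpa using h
  have hnorm : ∀ j, ∑ i, (x j i)^2 = 1 := by
    intro j
    have h1 : ⟪x j, x j⟫ = 1 := by
      have hn := horth.1 j
      rw [real_inner_self_eq_norm_sq, hn, one_pow]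
    rw [hinner] at h1
    simpa [sq] using h1
  have htsum : (n:ℝ) - k ≤ ∑ i, t i := by
    have : ∑ i, t i = (d : ℝ) := by
      rw [ht]
      rw [Finset.sum_comm]
      simp [hnorm]
    rw [this]; exact hd'
  have haa : Antitone (fun i => σ i ^ 2) := by
    intro i j hij
    exact pow_le_pow_left₀ (hσ0 j) (hσdec hij) 2
  refine le_trans (maj_aux hkn _ t haa (fun i => sq_nonneg _) ht0 ht1 htsum) ?_
  have hMx : ∀ j i, M.mulVec (x j) i = σ i * x j i := by
    intro j i
    rw [hM, Matrix.sub_mulVec, hCx j]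
    simp [Matrix.mulVec_diagonal]
  calc ∑ i, σ i ^ 2 * t i = ∑ j, ∑ i, (M.mulVec (x j) i)^2 := by
        rw [Finset.sum_comm]
        apply Finset.sum_congr rfl
        intro i _
        rw [ht, Finset.mul_sum]
        apply Finset.sum_congr rfl
        intro j _
        rw [hMx j i]
        ring
    _ ≤ ∑ i, ∑ l, (M i l)^2 := by
        rw [Finset.sum_comm]
        apply Finset.sum_le_sum
        intro i _
        have h := bessel (WithLp.toLp 2 (fun l => M i l) : EuclideanSpace ℝ (Fin n))
        have e : ∀ j, ⟪x j, (WithLp.toLp 2 (fun l => M i l) : EuclideanSpace ℝ (Fin n))⟫ = M.mulVec (x j) i := by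
          intro j
          rw [hinner]
          simp [Matrix.mulVec, dotProduct, mul_comm]
        rw [Finset.sum_congr rfl (fun j _ => by rw [e j])] at h
        refine h.trans ?_
        rw [← real_inner_self_eq_norm_sq, hinner]
        apply le_of_eq
        apply Finset.sum_congr rfl
        intro l _
        ring
    _ = frobSq M := rfl


lemma frobSq_eq_trace {n : ℕ} (M : Matrix (Fin n) (Fin n) ℝ) :
    frobSq M = (Mᵀ * M).trace := by
  simp [frobSq, Matrix.trace, Matrix.mul_apply, Matrix.diag, sq]
  exact Finset.sum_comm

lemma frobSq_conj {n : ℕ} (U V A : Matrix (Fin n) (Fin n) ℝ)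
    (hU' : U * Uᵀ = 1) (hV' : V * Vᵀ = 1) :
    frobSq (Uᵀ * A * V) = frobSq A := by
  rw [frobSq_eq_trace, frobSq_eq_trace]
  have h1 : (Uᵀ * A * V)ᵀ * (Uᵀ * A * V) = Vᵀ * Aᵀ * (U * Uᵀ) * (A * V) := by
    simp only [Matrix.transpose_mul, Matrix.transpose_transpose, Matrix.mul_assoc]
  rw [h1, hU', Matrix.mul_one, Matrix.trace_mul_cycle, Matrix.mul_assoc A V Vᵀ, hV',
    Matrix.mul_one, Matrix.trace_mul_comm]

theorem eckart_young_lower_bound (n : ℕ) (hn : 1 ≤ n) (σ : Fin n → ℝ)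
    (hσdec : Antitone σ) (hσnonneg : ∀ i, 0 ≤ σ i)
    (U V : Matrix (Fin n) (Fin n) ℝ) (hU : Uᵀ * U = 1) (hV : Vᵀ * V = 1)
    (k : ℕ) (hk : k ≤ n) :
    ∀ B : Matrix (Fin n) (Fin n) ℝ, B.rank ≤ k →
      frobSq (U * Matrix.diagonal σ * Vᵀ - B)
        ≥ ∑ i ∈ Finset.univ.filter (fun i : Fin n => k ≤ (i : ℕ)), σ i ^ 2 := by
  intro B hB
  have hfrob_nonneg : ∀ {m : ℕ} (M : Matrix (Fin m) (Fin m) ℝ), 0 ≤ frobSq M := by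
    intro m M
    exact Finset.sum_nonneg fun i _ => Finset.sum_nonneg fun j _ => sq_nonneg _
  rcases eq_or_lt_of_le hk with heq | hkn
  · subst heq
    have hz : ∑ i ∈ Finset.univ.filter (fun i : Fin k => k ≤ (i : ℕ)), σ i ^ 2 = 0 := by
      apply Finset.sum_eq_zero
      intro i hi
      simp only [Finset.mem_filter] at hi
      exact absurd hi.2 (not_le.mpr i.isLt)
    rw [ge_iff_le, hz]
    exact hfrob_nonneg _
  · have hU' : U * Uᵀ = 1 := mul_eq_one_comm.mp hU
    have hV' : V * Vᵀ = 1 := mul_eq_one_comm.mp hV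
    set C := Uᵀ * B * V with hCdef
    have hCrank : C.rank ≤ k := by
      calc C.rank ≤ (Uᵀ * B).rank := Matrix.rank_mul_le_left _ _
        _ ≤ B.rank := Matrix.rank_mul_le_right _ _
        _ ≤ k := hB
    have heq : Uᵀ * (U * Matrix.diagonal σ * Vᵀ - B) * V = Matrix.diagonal σ - C := by
      rw [Matrix.mul_sub, Matrix.sub_mul, hCdef]
      congr 1
      calc Uᵀ * (U * Matrix.diagonal σ * Vᵀ) * V
          = Uᵀ * U * Matrix.diagonal σ * (Vᵀ * V) := by
            simp only [Matrix.mul_assoc]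
        _ = Matrix.diagonal σ := by rw [hU, hV, Matrix.mul_one, Matrix.one_mul]
    have hfr : frobSq (U * Matrix.diagonal σ * Vᵀ - B) = frobSq (Matrix.diagonal σ - C) := by
      rw [← heq, frobSq_conj _ _ _ hU' hV']
    rw [ge_iff_le, hfr]
    exact key hkn σ hσdec hσnonneg C hCrank
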